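/- arXiv:2506.01079 — 2 statements merged into one kernel-verified Lean document; each statement's English description precedes it below -/
import Mathlib

section
/- For every positive integer s with |P(s)| ≥ 2, s ≥ 22; i.e., 22 is the smallest surface area admitting two non-isomorphic integer-dimension boxes. -/
/-- If a surface area `s` admits two non-isomorphic boxes with positive integer
dimensions, then `s ≥ 22`. -/
theorem two_boxes_area_ge_22 (s : ℕ) (t₁ t₂ : ℕ × ℕ × ℕ)
    (h₁ : 0 < t₁.1 ∧ t₁.1 ≤ t₁.2.1 ∧ t₁.2.1 ≤ t₁.2.2 ∧
      s = 2 * (t₁.1 * t₁.2.1 + t₁.1 * t₁.2.2 + t₁.2.1 * t₁.2.2))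
    (h₂ : 0 < t₂.1 ∧ t₂.1 ≤ t₂.2.1 ∧ t₂.2.1 ≤ t₂.2.2 ∧
      s = 2 * (t₂.1 * t₂.2.1 + t₂.1 * t₂.2.2 + t₂.2.1 * t₂.2.2))
    (hne : t₁ ≠ t₂) :
    22 ≤ s := by
  obtain ⟨a, b, c⟩ := t₁
  obtain ⟨a', b', c'⟩ := t₂
  simp only [ne_eq, Prod.mk.injEq, not_and] at hne
  obtain ⟨ha, hab, hbc, hs⟩ := h₁
  obtain ⟨ha', hab', hbc', hs'⟩ := h₂
  simp only at *
  by_contra hlt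
  push_neg at hlt
  have hsum : a * b + a * c + b * c ≤ 10 := by omega
  have hsum' : a' * b' + a' * c' + b' * c' ≤ 10 := by omega
  have ha1 : a = 1 := by nlinarith
  have ha1' : a' = 1 := by nlinarith
  subst ha1 ha1'
  have hb : b ≤ 2 := by nlinarith
  have hb' : b' ≤ 2 := by nlinarith
  interval_cases b <;> interval_cases b' <;> omega
end

section
/- Let P be a connected subgraph of the grid graph ℤ² and s a vertex of P. Suppose v = (x,y), v_l = (x−1,y), v_r = (x+1,y) are all vertices of P. Then it is impossible that d(v,s) > d(v_l,s) and d(v,s) > d(v_r,s) and additionally every lattice point strictly between any two vertices of P at the same x-coordinate on shortest paths lies in P, unless P has a hole (the complement of V(P) in the grid graph is disconnected). -/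
def gridGraph : SimpleGraph (ℤ × ℤ) where
  Adj u v := |u.1 - v.1| + |u.2 - v.2| = 1
  symm := by
    constructor
    intro u v h
    beta_reduce at h ⊢
    rw [abs_sub_comm v.1, abs_sub_comm v.2]
    exact h
  loopless := by
    constructor
    intro u h
    simp at h

/-!
Suppose `Sᶜ` is connected. Shortest paths from `vl` and from `vr` to `s`, closed up through `v`,
give a closed walk in `S` that crosses the edge `vl — v` once. Its winding number around the
centre of a unit square changes only across edges of the walk, so it is the same for all squares
touching the connected set `Sᶜ`, yet it differs between the two squares left of `v`, above and
below its row. Hence, moving up or down the column of `v` inside `S`, one meets the walk at some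
`u` before leaving `S`. Then `d(v, u) ≤ |Δy| < d(vl, u)` (or the same with `vr`), which is
impossible for a point `u` on a shortest path to `s` from a vertex closer to `s` than `v`.
-/

theorem Int.exists_gt_not_forall_Ioo_of_bddAbove {P : ℤ → Prop} (hP : BddAbove {t | P t})
    (y : ℤ) : ∃ k, y < k ∧ ¬ P k ∧ ∀ t ∈ Set.Ioo y k, P t := by
  obtain ⟨b, hb⟩ := hP
  obtain ⟨k, ⟨hyk, hk⟩, hmin⟩ := Int.exists_least_of_bdd (P := fun k => y < k ∧ ¬ P k)
    ⟨y, fun z hz => hz.1.le⟩ ⟨max b y + 1, by omega, fun h => by linarith [hb h, le_max_left b y]⟩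
  exact ⟨k, hyk, hk, fun t ht => by_contra fun h => absurd (hmin t ⟨ht.1, h⟩) (by linarith [ht.2])⟩

theorem Int.exists_lt_not_forall_Ioo_of_bddBelow {P : ℤ → Prop} (hP : BddBelow {t | P t})
    (y : ℤ) : ∃ k, k < y ∧ ¬ P k ∧ ∀ t ∈ Set.Ioo k y, P t := by
  obtain ⟨b, hb⟩ := hP
  obtain ⟨k, ⟨hky, hk⟩, hmax⟩ := Int.exists_greatest_of_bdd (P := fun k => k < y ∧ ¬ P k)
    ⟨y, fun z hz => hz.1.le⟩ ⟨min b y - 1, by omega, fun h => by linarith [hb h, min_le_left b y]⟩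
  exact ⟨k, hky, hk, fun t ht => by_contra fun h => absurd (hmax t ⟨ht.2, h⟩) (by linarith [ht.1])⟩

namespace SimpleGraph

variable {V : Type*} {G : SimpleGraph V}

theorem Connected.dist_lt_of_mem_support_of_length_eq_dist (hG : G.Connected) {a s v u : V}
    (γ : G.Walk a s) (hγ : γ.length = G.dist a s) (hu : u ∈ γ.support)
    (has : G.dist a s < G.dist v s) : G.dist a u < G.dist v u := by
  classical
  have hsplit := congrArg Walk.length (γ.take_spec hu)
  rw [Walk.length_append] at hsplit
  have := dist_le (γ.takeUntil u hu)
  have := dist_le (γ.dropUntil u hu)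
  have := hG.dist_triangle (u := v) (v := u) (w := s)
  omega

def edgeSign [DecidableEq V] (a b c d : V) : ℤ :=
  if c = a ∧ d = b then 1 else if c = b ∧ d = a then -1 else 0

namespace Walk

variable {u v w : V}

def dartSum (p : G.Walk u v) (f : V → V → ℤ) : ℤ :=
  (p.darts.map fun d => f d.fst d.snd).sum

@[simp]
theorem dartSum_nil (f : V → V → ℤ) : (nil : G.Walk u u).dartSum f = 0 := rfl

@[simp]
theorem dartSum_cons (h : G.Adj u v) (p : G.Walk v w) (f : V → V → ℤ) :
    (cons h p).dartSum f = f u v + p.dartSum f := by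
  simp [dartSum]

@[simp]
theorem dartSum_concat (p : G.Walk u v) (h : G.Adj v w) (f : V → V → ℤ) :
    (p.concat h).dartSum f = p.dartSum f + f v w := by
  simp [dartSum, darts_concat]

theorem dartSum_add (p : G.Walk u v) (f g : V → V → ℤ) :
    p.dartSum (fun c d => f c d + g c d) = p.dartSum f + p.dartSum g := by
  induction p with
  | nil => simp
  | cons h p ih => simp only [dartSum_cons, ih]; ring

theorem dartSum_sub (p : G.Walk u v) (f g : V → V → ℤ) :
    p.dartSum (fun c d => f c d - g c d) = p.dartSum f - p.dartSum g := by
  induction p with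
  | nil => simp
  | cons h p ih => simp only [dartSum_cons, ih]; ring

theorem dartSum_congr (p : G.Walk u v) {f g : V → V → ℤ}
    (hfg : ∀ c d, G.Adj c d → f c d = g c d) : p.dartSum f = p.dartSum g := by
  induction p with
  | nil => rfl
  | cons h p ih => simp only [dartSum_cons, ih, hfg _ _ h]

theorem dartSum_telescope (p : G.Walk u v) (ψ : V → ℤ) :
    p.dartSum (fun c d => ψ d - ψ c) = ψ v - ψ u := by
  induction p with
  | nil => simp
  | cons h p ih => simp only [dartSum_cons, ih]; ring

theorem dartSum_eq_zero (p : G.Walk u v) {f : V → V → ℤ}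
    (hf : ∀ c d, c ∈ p.support → d ∈ p.support → f c d = 0) : p.dartSum f = 0 := by
  refine List.sum_eq_zero fun x hx => ?_
  obtain ⟨d, hd, rfl⟩ := List.mem_map.1 hx
  exact hf _ _ (p.dart_fst_mem_support_of_mem_darts hd) (p.dart_snd_mem_support_of_mem_darts hd)

variable [DecidableEq V]

def flow (p : G.Walk u v) (a b : V) : ℤ := p.dartSum (edgeSign a b)

theorem flow_eq_zero_of_not_mem_support (p : G.Walk u v) {a b : V}
    (h : a ∉ p.support ∨ b ∉ p.support) : p.flow a b = 0 :=
  p.dartSum_eq_zero fun c d hc hd => by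
    unfold edgeSign
    split_ifs with h₁ h₂
    · rcases h with h | h <;> simp_all
    · rcases h with h | h <;> simp_all
    · rfl

end Walk

end SimpleGraph

open SimpleGraph

theorem gridGraph_adj_cases {c d : ℤ × ℤ} (h : gridGraph.Adj c d) :
    d = (c.1 + 1, c.2) ∨ d = (c.1 - 1, c.2) ∨ d = (c.1, c.2 + 1) ∨ d = (c.1, c.2 - 1) := by
  obtain ⟨d₁, d₂⟩ := d
  have h' : |c.1 - d₁| + |c.2 - d₂| = 1 := h
  simp only [Prod.mk.injEq]
  rcases abs_cases (c.1 - d₁) with ⟨_, _⟩ | ⟨_, _⟩ <;>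
    rcases abs_cases (c.2 - d₂) with ⟨_, _⟩ | ⟨_, _⟩ <;> omega

/-- Winding numbers are taken around the centre of the unit square with lower-left corner `F`,
by counting the signed crossings of the rightward horizontal ray from that centre, i.e. the
steps along vertical edges `(X, F.2) — (X, F.2 + 1)` with `F.1 < X`. -/
def rayCrossing (F c d : ℤ × ℤ) : ℤ :=
  if F.1 < c.1 then edgeSign (c.1, F.2) (c.1, F.2 + 1) c d else 0

def IsSquareCorner (z F : ℤ × ℤ) : Prop :=
  F.1 ≤ z.1 ∧ z.1 ≤ F.1 + 1 ∧ F.2 ≤ z.2 ∧ z.2 ≤ F.2 + 1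

theorem rayCrossing_sub_rayCrossing_add_one_fst (X Y : ℤ) (c d : ℤ × ℤ) :
    rayCrossing (X, Y) c d - rayCrossing (X + 1, Y) c d =
      edgeSign (X + 1, Y) (X + 1, Y + 1) c d := by
  obtain ⟨c₁, c₂⟩ := c
  obtain ⟨d₁, d₂⟩ := d
  simp only [rayCrossing, edgeSign, Prod.mk.injEq, true_and]
  split_ifs <;> omega

theorem rayCrossing_sub_rayCrossing_add_one_snd (X Y : ℤ) {c d : ℤ × ℤ}
    (h : gridGraph.Adj c d) :
    rayCrossing (X, Y) c d - rayCrossing (X, Y + 1) c d +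
        edgeSign (X, Y + 1) (X + 1, Y + 1) c d =
      (if d.2 = Y + 1 ∧ X < d.1 then 1 else 0) - (if c.2 = Y + 1 ∧ X < c.1 then 1 else 0) := by
  obtain ⟨c₁, c₂⟩ := c
  rcases gridGraph_adj_cases h with rfl | rfl | rfl | rfl <;>
    simp only [rayCrossing, edgeSign, Prod.mk.injEq, true_and] <;> split_ifs <;> omega

namespace SimpleGraph.Walk

variable {u v : ℤ × ℤ}

theorem abs_sub_add_abs_sub_le_length (q : gridGraph.Walk u v) :
    |u.1 - v.1| + |u.2 - v.2| ≤ q.length := by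
  induction q with
  | nil => simp
  | @cons a c b hac q ih =>
    have hac' : |a.1 - c.1| + |a.2 - c.2| = 1 := hac
    rw [length_cons, Nat.cast_succ]
    linarith [abs_sub_le a.1 c.1 b.1, abs_sub_le a.2 c.2 b.2]

def winding (p : gridGraph.Walk u v) (F : ℤ × ℤ) : ℤ := p.dartSum (rayCrossing F)

theorem winding_sub_winding_add_one_fst (p : gridGraph.Walk u v) (X Y : ℤ) :
    p.winding (X, Y) - p.winding (X + 1, Y) = p.flow (X + 1, Y) (X + 1, Y + 1) := by
  rw [winding, winding, ← dartSum_sub, flow]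
  exact p.dartSum_congr fun c d _ => rayCrossing_sub_rayCrossing_add_one_fst X Y c d

theorem winding_add_one_snd_sub_winding (p : gridGraph.Walk u u) (X Y : ℤ) :
    p.winding (X, Y + 1) - p.winding (X, Y) = p.flow (X, Y + 1) (X + 1, Y + 1) := by
  have h := p.dartSum_telescope fun c => if c.2 = Y + 1 ∧ X < c.1 then 1 else 0
  rw [sub_self, ← p.dartSum_congr fun c d hcd => rayCrossing_sub_rayCrossing_add_one_snd X Y hcd,
    dartSum_add, dartSum_sub] at h
  rw [winding, winding, flow]
  linarith

theorem winding_eq_of_not_mem_support (p : gridGraph.Walk u u) {z F : ℤ × ℤ}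
    (hz : z ∉ p.support) (hF : IsSquareCorner z F) :
    p.winding F = p.winding (z.1 - 1, z.2 - 1) := by
  obtain ⟨a, b⟩ := z
  obtain ⟨F₁, F₂⟩ := F
  have e₁ := p.winding_sub_winding_add_one_fst (a - 1) b
  have e₂ := p.winding_sub_winding_add_one_fst (a - 1) (b - 1)
  have e₃ := p.winding_add_one_snd_sub_winding (a - 1) (b - 1)
  simp only [sub_add_cancel] at e₁ e₂ e₃
  rw [p.flow_eq_zero_of_not_mem_support (.inl hz)] at e₁
  rw [p.flow_eq_zero_of_not_mem_support (.inr hz)] at e₂ e₃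
  obtain ⟨h₁, h₂, h₃, h₄⟩ := hF
  show p.winding (F₁, F₂) = p.winding (a - 1, b - 1)
  obtain rfl | rfl : F₁ = a - 1 ∨ F₁ = a := by omega
  all_goals obtain rfl | rfl : F₂ = b - 1 ∨ F₂ = b := by omega
  all_goals omega

theorem winding_eq_of_preconnected_compl (p : gridGraph.Walk u u) {S : Set (ℤ × ℤ)}
    (hp : ∀ c ∈ p.support, c ∈ S) (hS : (gridGraph.induce Sᶜ).Preconnected)
    {z z' F F' : ℤ × ℤ} (hz : z ∈ Sᶜ) (hz' : z' ∈ Sᶜ)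
    (hF : IsSquareCorner z F) (hF' : IsSquareCorner z' F') :
    p.winding F = p.winding F' := by
  have hoff : ∀ c ∈ Sᶜ, c ∉ p.support := fun c hc hcp => hc (hp c hcp)
  suffices key : ∀ {c c' : ↥Sᶜ} (_ : (gridGraph.induce Sᶜ).Walk c c'),
      p.winding ((c : ℤ × ℤ).1 - 1, (c : ℤ × ℤ).2 - 1) =
        p.winding ((c' : ℤ × ℤ).1 - 1, (c' : ℤ × ℤ).2 - 1) by
    rw [p.winding_eq_of_not_mem_support (hoff z hz) hF,
      p.winding_eq_of_not_mem_support (hoff z' hz') hF']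
    exact key (hS ⟨z, hz⟩ ⟨z', hz'⟩).some
  intro c c' q
  induction q with
  | nil => rfl
  | @cons c d _ hcd _ ih =>
    have hcd' : gridGraph.Adj (c : ℤ × ℤ) d := hcd
    -- adjacent points share the square whose lower-left corner is their coordinatewise minimum
    have hcorner : ∀ z, z = (c : ℤ × ℤ) ∨ z = (d : ℤ × ℤ) → IsSquareCorner z
        (min (c : ℤ × ℤ).1 (d : ℤ × ℤ).1, min (c : ℤ × ℤ).2 (d : ℤ × ℤ).2) := by
      rcases gridGraph_adj_cases hcd' with h | h | h | h <;> rintro z (rfl | rfl) <;>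
        simp only [IsSquareCorner, h] <;> omega
    rw [← ih, ← p.winding_eq_of_not_mem_support (hoff c c.2) (hcorner _ (.inl rfl)),
      p.winding_eq_of_not_mem_support (hoff d d.2) (hcorner _ (.inr rfl))]

theorem winding_eq_of_forall_not_mem_support (p : gridGraph.Walk u u) (x : ℤ) {a b : ℤ}
    (hab : a ≤ b) (h : ∀ t, a < t → t ≤ b → (x, t) ∉ p.support) :
    p.winding (x - 1, a) = p.winding (x - 1, b) := by
  induction b, hab using Int.leInduction with
  | base => rfl
  | succ b hab ih =>
    have step := p.winding_add_one_snd_sub_winding (x - 1) b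
    rw [sub_add_cancel, p.flow_eq_zero_of_not_mem_support (.inr (h (b + 1) (by omega) le_rfl))]
      at step
    rw [ih fun t h₁ h₂ => h t h₁ (by omega)]
    omega

theorem exists_mem_support_column_of_flow_ne_zero {S : Set (ℤ × ℤ)} (hS : S.Finite)
    (hSc : (gridGraph.induce Sᶜ).Preconnected) {v : ℤ × ℤ} (p : gridGraph.Walk v v)
    (hp : ∀ c ∈ p.support, c ∈ S) (hflow : p.flow (v.1 - 1, v.2) v ≠ 0) :
    ∃ y', y' ≠ v.2 ∧ (v.1, y') ∈ p.support ∧ ∀ t ∈ Set.uIcc v.2 y', (v.1, t) ∈ S := by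
  obtain ⟨x, y⟩ := v
  dsimp only at hflow ⊢
  set free : ℤ → Prop := fun t => (x, t) ∈ S ∧ (x, t) ∉ p.support
  have hfree : {t | free t}.Finite :=
    (hS.preimage (Prod.mk_right_injective x).injOn).subset fun t ht => ht.1
  obtain ⟨ku, hyku, hku, hbelow⟩ := Int.exists_gt_not_forall_Ioo_of_bddAbove hfree.bddAbove y
  obtain ⟨kd, hkdy, hkd, habove⟩ := Int.exists_lt_not_forall_Ioo_of_bddBelow hfree.bddBelow y
  have hv : (x, y) ∈ S := hp _ p.start_mem_support
  by_cases hu : (x, ku) ∈ p.support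
  · refine ⟨ku, hyku.ne', hu, fun t ht => ?_⟩
    rw [Set.uIcc_of_le hyku.le] at ht
    obtain rfl | hyt := ht.1.eq_or_lt
    · exact hv
    obtain rfl | htk := ht.2.eq_or_lt
    · exact hp _ hu
    exact (hbelow t ⟨hyt, htk⟩).1
  by_cases hd : (x, kd) ∈ p.support
  · refine ⟨kd, hkdy.ne, hd, fun t ht => ?_⟩
    rw [Set.uIcc_of_ge hkdy.le] at ht
    obtain rfl | hkt := ht.1.eq_or_lt
    · exact hp _ hd
    obtain rfl | hty := ht.2.eq_or_lt
    · exact hv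
    exact (habove t ⟨hkt, hty⟩).1
  have hku' : (x, ku) ∈ Sᶜ := fun h => hku ⟨h, hu⟩
  have hkd' : (x, kd) ∈ Sᶜ := fun h => hkd ⟨h, hd⟩
  have hup : p.winding (x - 1, y) = p.winding (x - 1, ku - 1) :=
    p.winding_eq_of_forall_not_mem_support x (by omega) fun t h₁ _ =>
      (hbelow t ⟨h₁, by omega⟩).2
  have hdown : p.winding (x - 1, kd) = p.winding (x - 1, y - 1) :=
    p.winding_eq_of_forall_not_mem_support x (by omega) fun t h₁ _ =>
      (habove t ⟨h₁, by omega⟩).2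
  have hout : p.winding (x - 1, ku - 1) = p.winding (x - 1, kd) :=
    p.winding_eq_of_preconnected_compl hp hSc hku' hkd'
      ⟨by omega, by omega, by omega, by omega⟩ ⟨by omega, by omega, by omega, by omega⟩
  have hcross := p.winding_add_one_snd_sub_winding (x - 1) (y - 1)
  rw [sub_add_cancel, sub_add_cancel] at hcross
  exact absurd (by omega) hflow

end SimpleGraph.Walk

theorem exists_mem_support_column_of_not_mem_support {S : Set (ℤ × ℤ)} (hS : S.Finite)
    (hSc : (gridGraph.induce Sᶜ).Preconnected) {v vl vr : S}
    (hvl : (vl : ℤ × ℤ) = ((v : ℤ × ℤ).1 - 1, (v : ℤ × ℤ).2))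
    (hvr : (vr : ℤ × ℤ) = ((v : ℤ × ℤ).1 + 1, (v : ℤ × ℤ).2))
    (γ : (gridGraph.induce S).Walk vl vr) (hv : v ∉ γ.support) :
    ∃ u ∈ γ.support, (v : ℤ × ℤ).1 = (u : ℤ × ℤ).1 ∧
      ∀ t ∈ Set.uIcc (v : ℤ × ℤ).2 (u : ℤ × ℤ).2, ((v : ℤ × ℤ).1, t) ∈ S := by
  classical
  let M : gridGraph.Walk vl vr := γ.map (Embedding.induce S).toHom
  have hM : M.support = γ.support.map Subtype.val := Walk.support_map _ _
  have hvM : (v : ℤ × ℤ) ∉ M.support := by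
    rw [hM, List.mem_map]
    rintro ⟨u, hu, huv⟩
    exact hv (Subtype.ext huv ▸ hu)
  have hadjl : gridGraph.Adj v vl := by
    rw [hvl]
    show |_ - (_ - 1)| + |_ - _| = (1 : ℤ)
    simp
  have hadjr : gridGraph.Adj vr v := by
    rw [hvr]
    show |(_ + 1) - _| + |_ - _| = (1 : ℤ)
    simp
  let W : gridGraph.Walk v v := (M.concat hadjr).cons hadjl
  have hW : ∀ c ∈ W.support, c = v ∨ c ∈ M.support := by
    intro c hc
    simp only [W, Walk.support_cons, Walk.support_concat, List.mem_cons, List.mem_append] at hc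
    tauto
  have hWS : ∀ c ∈ W.support, c ∈ S := fun c hc => by
    rcases hW c hc with rfl | hc
    · exact v.2
    · obtain ⟨u, -, rfl⟩ := List.mem_map.1 (hM ▸ hc)
      exact u.2
  have hflow : W.flow ((v : ℤ × ℤ).1 - 1, (v : ℤ × ℤ).2) v = -1 := by
    rw [← hvl]
    simp only [W, Walk.flow, Walk.dartSum_cons, Walk.dartSum_concat]
    rw [← Walk.flow, M.flow_eq_zero_of_not_mem_support (.inr hvM)]
    simp [edgeSign, hvl, hvr, Prod.ext_iff]
    omega
  obtain ⟨y', hy', hmem, hcol⟩ :=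
    W.exists_mem_support_column_of_flow_ne_zero hS hSc hWS (by rw [hflow]; decide)
  obtain ⟨u, hu, huy⟩ := List.mem_map.1
    (hM ▸ (hW _ hmem).resolve_left fun h => hy' (congrArg Prod.snd h))
  exact ⟨u, hu, by rw [huy], by rwa [huy]⟩

namespace SimpleGraph.Connected

variable {S : Set (ℤ × ℤ)}

theorem abs_sub_add_abs_sub_le_dist (hS : (gridGraph.induce S).Connected) (a b : S) :
    |(a : ℤ × ℤ).1 - (b : ℤ × ℤ).1| + |(a : ℤ × ℤ).2 - (b : ℤ × ℤ).2| ≤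
      (gridGraph.induce S).dist a b := by
  obtain ⟨q, hq⟩ := (hS.preconnected a b).exists_walk_length_eq_dist
  have := (q.map (Embedding.induce S).toHom).abs_sub_add_abs_sub_le_length
  rwa [Walk.length_map, hq] at this

theorem dist_le_of_column (hS : (gridGraph.induce S).Connected) {u w : S}
    (hx : (u : ℤ × ℤ).1 = (w : ℤ × ℤ).1)
    (hcol : ∀ t ∈ Set.uIcc (u : ℤ × ℤ).2 (w : ℤ × ℤ).2, ((u : ℤ × ℤ).1, t) ∈ S) :
    ((gridGraph.induce S).dist u w : ℤ) ≤ |(u : ℤ × ℤ).2 - (w : ℤ × ℤ).2| := by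
  wlog huw : (u : ℤ × ℤ).2 ≤ (w : ℤ × ℤ).2 generalizing u w
  · rw [dist_comm, abs_sub_comm]
    exact this hx.symm (by rwa [Set.uIcc_comm, ← hx]) (le_of_not_ge huw)
  obtain ⟨⟨x, a⟩, hu⟩ := u
  obtain ⟨⟨x', b⟩, hw⟩ := w
  dsimp only at hx hcol huw ⊢
  subst hx
  rw [abs_sub_comm, abs_of_nonneg (by omega)]
  rw [Set.uIcc_of_le huw] at hcol
  induction b, huw using Int.leInduction with
  | base => simp
  | succ b hab ih =>
    have hb : (x, b) ∈ S := hcol b ⟨hab, by omega⟩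
    have hadj : (gridGraph.induce S).Adj ⟨(x, b), hb⟩ ⟨(x, b + 1), hw⟩ := by
      show |x - x| + |b - (b + 1)| = 1
      simp
    have := hS.dist_triangle (u := ⟨(x, a), hu⟩) (v := ⟨(x, b), hb⟩) (w := ⟨(x, b + 1), hw⟩)
    rw [dist_eq_one_iff_adj.mpr hadj] at this
    have := ih (fun t ht => hcol t (Set.Icc_subset_Icc_right (by omega) ht)) hb
    omega

theorem not_mem_support_of_column (hS : (gridGraph.induce S).Connected) {a s v u : S}
    (γ : (gridGraph.induce S).Walk a s) (hγ : γ.length = (gridGraph.induce S).dist a s)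
    (has : (gridGraph.induce S).dist a s < (gridGraph.induce S).dist v s)
    (hrow : (a : ℤ × ℤ).2 = (v : ℤ × ℤ).2) (hx : (v : ℤ × ℤ).1 = (u : ℤ × ℤ).1)
    (hcol : ∀ t ∈ Set.uIcc (v : ℤ × ℤ).2 (u : ℤ × ℤ).2, ((v : ℤ × ℤ).1, t) ∈ S) :
    u ∉ γ.support := fun hu => by
  have hlt : ((gridGraph.induce S).dist a u : ℤ) < (gridGraph.induce S).dist v u := by
    exact_mod_cast hS.dist_lt_of_mem_support_of_length_eq_dist γ hγ hu has
  have hvu := hS.dist_le_of_column hx hcol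
  have hau := hS.abs_sub_add_abs_sub_le_dist a u
  rw [hrow] at hau
  linarith [abs_nonneg ((a : ℤ × ℤ).1 - (u : ℤ × ℤ).1)]

end SimpleGraph.Connected

/-- Let `P` be a finite connected induced subgraph of the grid graph on `ℤ²`
(a polyomino) and `s` a vertex of `P`. If some vertex `v = (x,y)` of `P` has both
horizontal neighbors `(x-1,y)` and `(x+1,y)` in `P`, and `v` is strictly farther
from `s` than both of them, then `P` has a hole: the subgraph of the grid graph
induced by the complement of `V(P)` is disconnected. -/
theorem collinear_pattern_implies_hole (S : Set (ℤ × ℤ)) (hS : S.Finite)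
    (hconn : (gridGraph.induce S).Connected)
    (s v vl vr : S)
    (hvl : (vl : ℤ × ℤ) = ((v : ℤ × ℤ).1 - 1, (v : ℤ × ℤ).2))
    (hvr : (vr : ℤ × ℤ) = ((v : ℤ × ℤ).1 + 1, (v : ℤ × ℤ).2))
    (hl : (gridGraph.induce S).dist vl s < (gridGraph.induce S).dist v s)
    (hr : (gridGraph.induce S).dist vr s < (gridGraph.induce S).dist v s) :
    ¬ (gridGraph.induce Sᶜ).Connected := by
  classical
  intro hcompl
  obtain ⟨γl, hγl⟩ := (hconn.preconnected vl s).exists_walk_length_eq_dist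
  obtain ⟨γr, hγr⟩ := (hconn.preconnected vr s).exists_walk_length_eq_dist
  have hoff : ∀ u : S, (v : ℤ × ℤ).1 = (u : ℤ × ℤ).1 →
      (∀ t ∈ Set.uIcc (v : ℤ × ℤ).2 (u : ℤ × ℤ).2, ((v : ℤ × ℤ).1, t) ∈ S) →
      u ∉ (γl.append γr.reverse).support := fun u hx hcol => by
    rw [Walk.mem_support_append_iff, Walk.support_reverse, List.mem_reverse, not_or]
    exact ⟨hconn.not_mem_support_of_column γl hγl hl (by rw [hvl]) hx hcol,
      hconn.not_mem_support_of_column γr hγr hr (by rw [hvr]) hx hcol⟩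
  obtain ⟨u, hu, hx, hcol⟩ := exists_mem_support_column_of_not_mem_support hS
    hcompl.preconnected hvl hvr (γl.append γr.reverse) (hoff v rfl (by simp [v.2]))
  exact hoff u hx hcol hu
end
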